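/- arXiv:2505.19183 — 2 statements merged into one kernel-verified Lean document; each statement's English description precedes it below -/
import Mathlib

section
/- Let C ⊆ V be a nonempty cluster of nodes whose local datasets satisfy y⁽ⁱ⁾ = X⁽ⁱ⁾ w̄^{(C)} + ε⁽ⁱ⁾ for all i ∈ C, with one common parameter vector w̄^{(C)} ∈ ℝ^d. Let (ŵ⁽¹⁾,…,ŵ⁽ⁿ⁾) be any solution of GTVMin, and for i ∈ C define w̃⁽ⁱ⁾ = ŵ⁽ⁱ⁾ − (1/|C|) Σ_{i'∈C} ŵ⁽ⁱ'⁾. If the induced subgraph on C is connected, i.e., λ₂(L_C) > 0, then Σ_{i∈C} ‖w̃⁽ⁱ⁾‖₂² ≤ (1/(α λ₂(L_C))) · [ Σ_{i∈C} (1/mᵢ)‖ε⁽ⁱ⁾‖₂² + 2 α b(C) (‖w̄^{(C)}‖₂² + R²) ], where b(C) = Σ_{{i,i'}∈E, i∈C, i'∉C} A_{i,i'} is the weighted cluster boundary and R = max_{i'∈V∖C} ‖ŵ⁽ⁱ'⁾‖₂ (with R = 0 if C = V). -/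
open Matrix Finset
open scoped Kronecker

noncomputable section

/-- The Laplacian matrix of the empirical graph with edge-weight matrix `A`. -/
def lap {n : ℕ} (A : Matrix (Fin n) (Fin n) ℝ) : Matrix (Fin n) (Fin n) ℝ :=
  Matrix.of fun i j => if i = j then ∑ k ∈ Finset.univ.erase i, A i k else -A i j

/-- The eigenvalues of a real symmetric matrix, in arbitrary order
(junk value `0` if the matrix is not symmetric). -/
def matEigs {ι : Type*} [Fintype ι] [DecidableEq ι] (M : Matrix ι ι ℝ) : ι → ℝ :=
  @dite _ M.IsHermitian (Classical.dec _) (fun h => h.eigenvalues) (fun _ => 0)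

/-- The smallest eigenvalue of a real symmetric matrix. -/
def lamMin {ι : Type*} [Fintype ι] [DecidableEq ι] (M : Matrix ι ι ℝ) : ℝ :=
  ⨅ k, matEigs M k

/-- The largest eigenvalue of a real symmetric matrix. -/
def lamMax {ι : Type*} [Fintype ι] [DecidableEq ι] (M : Matrix ι ι ℝ) : ℝ :=
  ⨆ k, matEigs M k

/-- The eigenvalues of a real symmetric matrix, sorted in ascending order. -/
def sortedEigs {ι : Type*} [Fintype ι] [DecidableEq ι] (M : Matrix ι ι ℝ) :
    Fin (Fintype.card ι) → ℝ := fun k =>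
  matEigs (Matrix.reindex (Fintype.equivFin ι) (Fintype.equivFin ι) M)
    (Tuple.sort (matEigs (Matrix.reindex (Fintype.equivFin ι) (Fintype.equivFin ι) M)) k)

/-- The second-smallest eigenvalue `λ₂` of a real symmetric matrix
(junk value `0` for matrices of size `< 2`). -/
def eigTwo {ι : Type*} [Fintype ι] [DecidableEq ι] (M : Matrix ι ι ℝ) : ℝ :=
  if h : 1 < Fintype.card ι then sortedEigs M ⟨1, h⟩ else 0

/-- The GTVMin objective for local linear models: the sum of the local average squared-error
losses plus `α` times the GTV, the latter being a sum over unordered pairs of nodes. -/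
def gtvObj {n d : ℕ} (A : Matrix (Fin n) (Fin n) ℝ) (m : Fin n → ℕ)
    (X : (i : Fin n) → Matrix (Fin (m i)) (Fin d) ℝ)
    (y : (i : Fin n) → EuclideanSpace ℝ (Fin (m i)))
    (α : ℝ) (w : Fin n → EuclideanSpace ℝ (Fin d)) : ℝ :=
  (∑ i, (1 / (m i : ℝ)) * ‖y i - Matrix.toEuclideanLin (X i) (w i)‖ ^ 2) +
    α * ∑ p ∈ Finset.univ.filter (fun p : Fin n × Fin n => p.1 < p.2),
      A p.1 p.2 * ‖w p.1 - w p.2‖ ^ 2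

/-- The Laplacian matrix of the subgraph induced by a cluster `C`. -/
def lapSub {n : ℕ} (A : Matrix (Fin n) (Fin n) ℝ) (C : Finset (Fin n)) :
    Matrix {i : Fin n // i ∈ C} {i : Fin n // i ∈ C} ℝ :=
  Matrix.of fun i j => if i = j then ∑ k ∈ C.erase i.1, A i.1 k else -A i.1 j.1

/-!
Each coordinate of the centred vectors `w̃⁽ⁱ⁾` is orthogonal to the constant vector, which lies in
the kernel of `L_C`; as all other eigenvalues of `L_C` are at least `λ₂(L_C) > 0`, the quadratic
form of `L_C` gives `λ₂ ∑_{i∈C} ‖w̃⁽ⁱ⁾‖² ≤ ½ ∑_{i,j∈C} A_{ij} ‖ŵ⁽ⁱ⁾ - ŵ⁽ʲ⁾‖²`, the GTV inside `C`.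
Comparing `ŵ` with the competitor equal to `w̄^{(C)}` on `C` and to `ŵ` elsewhere, the loss on `C`
drops to the noise term and the GTV inside `C` vanishes, while each boundary edge costs at most
`2 (‖w̄^{(C)}‖² + R²)`; optimality of `ŵ` turns this into the bound.
-/

namespace Matrix.IsHermitian

variable {ι : Type*} [Fintype ι] [DecidableEq ι] {M : Matrix ι ι ℝ} (hM : M.IsHermitian)

lemma dotProduct_eq_sum_eigenvectorBasis_repr (x y : ι → ℝ) :
    x ⬝ᵥ y = ∑ k, hM.eigenvectorBasis.repr (WithLp.toLp 2 x) k *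
      hM.eigenvectorBasis.repr (WithLp.toLp 2 y) k := by
  calc x ⬝ᵥ y = inner ℝ (WithLp.toLp 2 x) (WithLp.toLp 2 y) := by
        rw [EuclideanSpace.inner_toLp_toLp, dotProduct_comm, star_trivial]
    _ = _ := by
        rw [← hM.eigenvectorBasis.sum_inner_mul_inner]
        simp only [OrthonormalBasis.repr_apply_apply, real_inner_comm]

lemma eigenvectorBasis_repr_mulVec (v : ι → ℝ) (k : ι) :
    hM.eigenvectorBasis.repr (WithLp.toLp 2 (M *ᵥ v)) k =
      hM.eigenvalues k * hM.eigenvectorBasis.repr (WithLp.toLp 2 v) k := by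
  have hT := isSymmetric_toEuclideanLin_iff.mpr hM
  have hb : toEuclideanLin M (hM.eigenvectorBasis k) =
      hM.eigenvalues k • hM.eigenvectorBasis k := by
    ext1; simp [toLpLin_apply, hM.mulVec_eigenvectorBasis k]
  rw [OrthonormalBasis.repr_apply_apply, OrthonormalBasis.repr_apply_apply,
    show WithLp.toLp 2 (M *ᵥ v) = toEuclideanLin M (WithLp.toLp 2 v) from rfl,
    ← hT, hb, real_inner_smul_left]

/-- Since `M u = 0` and every eigenvalue but the `k₀`-th is positive, `u` is a multiple of the
`k₀`-th eigenvector, so `v ⊥ u` has no component along it. -/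
lemma mul_dotProduct_le_of_mulVec_eq_zero {lam : ℝ} (hlam : 0 < lam) (k₀ : ι)
    (hge : ∀ k ≠ k₀, lam ≤ hM.eigenvalues k) {u v : ι → ℝ} (hu : u ≠ 0)
    (hMu : M *ᵥ u = 0) (huv : u ⬝ᵥ v = 0) :
    lam * (v ⬝ᵥ v) ≤ v ⬝ᵥ (M *ᵥ v) := by
  set c : (ι → ℝ) → ι → ℝ := fun x => hM.eigenvectorBasis.repr (WithLp.toLp 2 x)
  have hdot := hM.dotProduct_eq_sum_eigenvectorBasis_repr
  have hcu : ∀ k ≠ k₀, c u k = 0 := fun k hk => by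
    have h := hM.eigenvectorBasis_repr_mulVec u k
    rw [hMu, WithLp.toLp_zero, map_zero] at h
    exact (mul_eq_zero.mp h.symm).resolve_left (hlam.trans_le (hge k hk)).ne'
  have hsum_single : ∀ f : ι → ℝ, ∑ k, c u k * f k = c u k₀ * f k₀ := fun f =>
    Fintype.sum_eq_single k₀ fun k hk => by rw [hcu k hk, zero_mul]
  have hcu₀ : c u k₀ ≠ 0 := by
    intro h
    apply hu
    rw [← dotProduct_self_eq_zero, hdot, hsum_single, h, zero_mul]
  have hcv₀ : c v k₀ = 0 := by
    rw [hdot, hsum_single] at huv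
    exact (mul_eq_zero.mp huv).resolve_left hcu₀
  rw [hdot, hdot, Finset.mul_sum]
  refine Finset.sum_le_sum fun k _ => ?_
  simp only [hM.eigenvectorBasis_repr_mulVec]
  by_cases hk : k = k₀
  · simp [hk, c, hcv₀]
  · nlinarith [hge k hk, mul_self_nonneg (c v k)]

end Matrix.IsHermitian

lemma Matrix.reindex_mulVec_comp_symm {α ι κ : Type*} [NonUnitalNonAssocSemiring α] [Fintype ι]
    [Fintype κ] (e : ι ≃ κ) (M : Matrix ι ι α) (v : ι → α) :
    reindex e e M *ᵥ (v ∘ e.symm) = (M *ᵥ v) ∘ e.symm := by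
  rw [reindex_apply, submatrix_mulVec_equiv, Equiv.symm_symm, Function.comp_assoc,
    Equiv.symm_comp_self, Function.comp_id]

section eigTwo

variable {ι : Type*} [Fintype ι] [DecidableEq ι]

lemma one_lt_card_of_eigTwo_pos {M : Matrix ι ι ℝ} (h : 0 < eigTwo M) :
    1 < Fintype.card ι := by
  by_contra hcard
  rw [eigTwo, dif_neg hcard] at h
  exact h.false

lemma eigTwo_mul_dotProduct_le {M : Matrix ι ι ℝ} (hM : M.IsHermitian) (hpos : 0 < eigTwo M)
    {u v : ι → ℝ} (hu : u ≠ 0) (hMu : M *ᵥ u = 0) (huv : u ⬝ᵥ v = 0) :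
    eigTwo M * (v ⬝ᵥ v) ≤ v ⬝ᵥ (M *ᵥ v) := by
  have hcard := one_lt_card_of_eigTwo_pos hpos
  set e := Fintype.equivFin ι
  have hB : (reindex e e M).IsHermitian := hM.submatrix _
  set σ := Tuple.sort hB.eigenvalues
  have heig : eigTwo M = hB.eigenvalues (σ ⟨1, hcard⟩) := by
    rw [eigTwo, dif_pos hcard, sortedEigs, matEigs, dif_pos hB]
  have hge : ∀ k ≠ σ ⟨0, by omega⟩, hB.eigenvalues (σ ⟨1, hcard⟩) ≤ hB.eigenvalues k := by
    intro k hk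
    obtain ⟨j, rfl⟩ := σ.surjective k
    have hj : (⟨1, hcard⟩ : Fin _) ≤ j := by
      rw [Fin.le_def, Nat.one_le_iff_ne_zero]
      exact fun h => hk (congrArg σ (Fin.ext h))
    exact Tuple.monotone_sort hB.eigenvalues hj
  have hcomp (x : ι → ℝ) : x ∘ e.symm ∘ e = x := by
    rw [Equiv.symm_comp_self, Function.comp_id]
  have hu' : u ∘ e.symm ≠ 0 := fun h => hu (by rw [← hcomp u, ← Function.comp_assoc, h]; rfl)
  have key := hB.mul_dotProduct_le_of_mulVec_eq_zero (v := v ∘ e.symm) (heig ▸ hpos) _ hge hu'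
    (by rw [reindex_mulVec_comp_symm, hMu]; rfl)
    (by rwa [dotProduct_comp_equiv_symm, Function.comp_assoc, hcomp])
  rwa [reindex_mulVec_comp_symm, dotProduct_comp_equiv_symm, dotProduct_comp_equiv_symm,
    Function.comp_assoc, hcomp, ← heig] at key

end eigTwo

lemma Finset.sum_sum_mul_sub_sq_eq_two_mul {ι R : Type*} [Fintype ι] [CommRing R]
    (a : ι → ι → R) (ha : ∀ i j, a i j = a j i) (x : ι → R) :
    ∑ i, ∑ j, a i j * (x i - x j) ^ 2 = 2 * ∑ i, ∑ j, a i j * (x i * (x i - x j)) := by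
  have hswap : ∑ i, ∑ j, a i j * (x j * (x j - x i)) = ∑ i, ∑ j, a i j * (x i * (x i - x j)) := by
    rw [Finset.sum_comm]
    simp_rw [ha]
  calc ∑ i, ∑ j, a i j * (x i - x j) ^ 2
      = ∑ i, ∑ j, (a i j * (x i * (x i - x j)) + a i j * (x j * (x j - x i))) := by
        congr! 2; ring
    _ = _ := by simp_rw [Finset.sum_add_distrib, hswap, two_mul]

section lapSub

variable {n : ℕ} (A : Matrix (Fin n) (Fin n) ℝ) (C : Finset (Fin n))

lemma lapSub_apply (i j : C) :
    lapSub A C i j = (if i = j then ∑ k : C, A i k else 0) - A i j := by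
  rw [lapSub, of_apply]
  split_ifs with h
  · rw [h, Finset.sum_erase_eq_sub j.2, Finset.sum_coe_sort C (A j)]
  · rw [zero_sub]

lemma lapSub_mulVec_apply (v : C → ℝ) (i : C) :
    (lapSub A C *ᵥ v) i = ∑ j : C, A i j * (v i - v j) := by
  simp only [mulVec, dotProduct, lapSub_apply, sub_mul, ite_mul, zero_mul, Finset.sum_sub_distrib,
    Finset.sum_ite_eq, Finset.mem_univ, if_true, mul_sub, Finset.sum_mul]

lemma lapSub_mulVec_const (c : ℝ) : lapSub A C *ᵥ (fun _ => c) = 0 := by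
  ext i
  simp [lapSub_mulVec_apply]

lemma lapSub_isHermitian (hA : ∀ i j, A i j = A j i) : (lapSub A C).IsHermitian := by
  ext i j
  rw [conjTranspose_apply, star_trivial, lapSub_apply, lapSub_apply, hA j i]
  by_cases h : i = j
  · subst h; rfl
  · rw [if_neg (Ne.symm h), if_neg h]

lemma dotProduct_lapSub_mulVec (hA : ∀ i j, A i j = A j i) (v : C → ℝ) :
    v ⬝ᵥ (lapSub A C *ᵥ v) = 1 / 2 * ∑ i : C, ∑ j : C, A i j * (v i - v j) ^ 2 := by
  rw [Finset.sum_sum_mul_sub_sq_eq_two_mul (fun i j : C => A i j) (fun i j => hA i j)]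
  rw [← mul_assoc, one_div, inv_mul_cancel₀ two_ne_zero, one_mul]
  simp only [dotProduct, lapSub_mulVec_apply, Finset.mul_sum]
  exact Finset.sum_congr rfl fun i _ => Finset.sum_congr rfl fun j _ => by ring

lemma eigTwo_lapSub_mul_sum_norm_sq_le {d : ℕ} (hA : ∀ i j, A i j = A j i)
    (hpos : 0 < eigTwo (lapSub A C)) (f : Fin n → EuclideanSpace ℝ (Fin d))
    (hf : ∑ i ∈ C, f i = 0) :
    eigTwo (lapSub A C) * ∑ i ∈ C, ‖f i‖ ^ 2 ≤
      1 / 2 * ∑ i ∈ C, ∑ j ∈ C, A i j * ‖f i - f j‖ ^ 2 := by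
  have hne : (fun _ : C => (1 : ℝ)) ≠ 0 := by
    obtain ⟨i⟩ := Fintype.card_pos_iff.mp (one_pos.trans (one_lt_card_of_eigTwo_pos hpos))
    exact fun h => one_ne_zero (congrFun h i)
  have hcoord (l : Fin d) : eigTwo (lapSub A C) * ∑ i ∈ C, f i l ^ 2 ≤
      1 / 2 * ∑ i ∈ C, ∑ j ∈ C, A i j * (f i l - f j l) ^ 2 := by
    have hsum : ∑ i : C, f i l = 0 := by
      rw [Finset.sum_coe_sort C (fun i => f i l)]
      simpa using congrArg (· l) hf
    have h := eigTwo_mul_dotProduct_le (lapSub_isHermitian A C hA) hpos hne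
      (lapSub_mulVec_const A C 1) (v := fun i : C => f i l) (by simpa [dotProduct] using hsum)
    rw [dotProduct_lapSub_mulVec A C hA] at h
    convert h using 2
    · simp only [dotProduct, ← sq]
      exact (Finset.sum_coe_sort C (fun i => f i l ^ 2)).symm
    · rw [← Finset.sum_coe_sort C]
      exact Finset.sum_congr rfl fun i _ => (Finset.sum_coe_sort C _).symm
  calc eigTwo (lapSub A C) * ∑ i ∈ C, ‖f i‖ ^ 2
      = ∑ l, eigTwo (lapSub A C) * ∑ i ∈ C, f i l ^ 2 := by
        simp_rw [EuclideanSpace.real_norm_sq_eq]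
        rw [Finset.sum_comm, Finset.mul_sum]
    _ ≤ ∑ l, 1 / 2 * ∑ i ∈ C, ∑ j ∈ C, A i j * (f i l - f j l) ^ 2 :=
        Finset.sum_le_sum fun l _ => hcoord l
    _ = 1 / 2 * ∑ i ∈ C, ∑ j ∈ C, A i j * ‖f i - f j‖ ^ 2 := by
        simp_rw [EuclideanSpace.real_norm_sq_eq, PiLp.sub_apply, Finset.mul_sum]
        rw [Finset.sum_comm]
        refine Finset.sum_congr rfl fun i _ => ?_
        rw [Finset.sum_comm]

end lapSub

lemma Finset.sum_sub_card_inv_smul_sum {ι 𝕜 E : Type*} [Field 𝕜] [CharZero 𝕜] [AddCommGroup E]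
    [Module 𝕜 E] (s : Finset ι) (f : ι → E) :
    ∑ i ∈ s, (f i - (s.card : 𝕜)⁻¹ • ∑ j ∈ s, f j) = 0 := by
  rcases s.eq_empty_or_nonempty with rfl | hs
  · rw [Finset.sum_empty]
  · rw [Finset.sum_sub_distrib, Finset.sum_const, ← Nat.cast_smul_eq_nsmul 𝕜, smul_smul,
      mul_inv_cancel₀ (Nat.cast_ne_zero.mpr hs.card_pos.ne'), one_smul, sub_self]

lemma Finset.sum_filter_fst_lt_snd_eq_half {ι : Type*} [Fintype ι] [LinearOrder ι]
    (G : ι → ι → ℝ) (hG : ∀ i j, G i j = G j i) (hG₀ : ∀ i, G i i = 0) :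
    ∑ p ∈ univ.filter (fun p : ι × ι => p.1 < p.2), G p.1 p.2 = 1 / 2 * ∑ i, ∑ j, G i j := by
  have hsplit (i j : ι) :
      G i j = (if i < j then G i j else 0) + (if j < i then G j i else 0) := by
    rcases lt_trichotomy i j with h | rfl | h
    · simp [h, h.not_gt]
    · simp [hG₀]
    · simp [h, h.not_gt, hG]
  calc ∑ p ∈ univ.filter (fun p : ι × ι => p.1 < p.2), G p.1 p.2
      = ∑ i, ∑ j, if i < j then G i j else 0 := by
        rw [Finset.sum_filter, ← Finset.univ_product_univ, Finset.sum_product]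
    _ = 1 / 2 * ∑ i, ∑ j, ((if i < j then G i j else 0) + (if j < i then G j i else 0)) := by
        simp_rw [Finset.sum_add_distrib]
        rw [Finset.sum_comm (f := fun i j => if j < i then G j i else 0)]
        ring
    _ = 1 / 2 * ∑ i, ∑ j, G i j := by simp_rw [← hsplit]

section GTV

variable {n d : ℕ} (A : Matrix (Fin n) (Fin n) ℝ)

def crossGTV (w : Fin n → EuclideanSpace ℝ (Fin d)) (D E : Finset (Fin n)) : ℝ :=
  ∑ i ∈ D, ∑ j ∈ E, A i j * ‖w i - w j‖ ^ 2

variable {A}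

lemma crossGTV_comm (hA : ∀ i j, A i j = A j i) (w : Fin n → EuclideanSpace ℝ (Fin d))
    (D E : Finset (Fin n)) : crossGTV A w D E = crossGTV A w E D := by
  rw [crossGTV, crossGTV, Finset.sum_comm]
  simp_rw [hA, norm_sub_rev]

lemma crossGTV_nonneg (hA : ∀ i j, 0 ≤ A i j) (w : Fin n → EuclideanSpace ℝ (Fin d))
    (D E : Finset (Fin n)) : 0 ≤ crossGTV A w D E :=
  Finset.sum_nonneg fun i _ => Finset.sum_nonneg fun j _ => mul_nonneg (hA i j) (sq_nonneg _)

lemma gtv_eq_crossGTV (hA : ∀ i j, A i j = A j i) (C : Finset (Fin n))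
    (w : Fin n → EuclideanSpace ℝ (Fin d)) :
    ∑ p ∈ Finset.univ.filter (fun p : Fin n × Fin n => p.1 < p.2),
        A p.1 p.2 * ‖w p.1 - w p.2‖ ^ 2 =
      1 / 2 * crossGTV A w C C + crossGTV A w C Cᶜ + 1 / 2 * crossGTV A w Cᶜ Cᶜ := by
  rw [Finset.sum_filter_fst_lt_snd_eq_half (fun i j => A i j * ‖w i - w j‖ ^ 2)
    (fun i j => by rw [hA, norm_sub_rev]) (fun i => by simp),
    ← Finset.sum_add_sum_compl C]
  simp_rw [← Finset.sum_add_sum_compl C (fun j => A _ j * ‖w _ - w j‖ ^ 2),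
    Finset.sum_add_distrib]
  rw [← crossGTV, ← crossGTV, ← crossGTV, ← crossGTV, crossGTV_comm hA w Cᶜ C]
  ring

lemma crossGTV_self_le_of_forall_gtvObj_le {m : Fin n → ℕ}
    {X : (i : Fin n) → Matrix (Fin (m i)) (Fin d) ℝ}
    {y ε : (i : Fin n) → EuclideanSpace ℝ (Fin (m i))} {α : ℝ} {C : Finset (Fin n)}
    {wC : EuclideanSpace ℝ (Fin d)} {what : Fin n → EuclideanSpace ℝ (Fin d)}
    (hAsymm : ∀ i j, A i j = A j i) (hAnonneg : ∀ i j, 0 ≤ A i j) (hα : 0 ≤ α)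
    (hy : ∀ i ∈ C, y i = toEuclideanLin (X i) wC + ε i)
    (hmin : ∀ w, gtvObj A m X y α what ≤ gtvObj A m X y α w) :
    α * (1 / 2 * crossGTV A what C C) ≤
      ∑ i ∈ C, (1 / (m i : ℝ)) * ‖ε i‖ ^ 2 +
        α * ∑ i ∈ C, ∑ j ∈ Cᶜ, A i j * ‖wC - what j‖ ^ 2 := by
  set w' : Fin n → EuclideanSpace ℝ (Fin d) := fun i => if i ∈ C then wC else what i
  set loss : (Fin n → EuclideanSpace ℝ (Fin d)) → Fin n → ℝ :=
    fun w i => (1 / (m i : ℝ)) * ‖y i - toEuclideanLin (X i) (w i)‖ ^ 2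
  have hloss_C : ∑ i ∈ C, loss w' i = ∑ i ∈ C, (1 / (m i : ℝ)) * ‖ε i‖ ^ 2 :=
    Finset.sum_congr rfl fun i hi => by simp [loss, w', hi, hy i hi]
  have hloss_compl : ∑ i ∈ Cᶜ, loss w' i = ∑ i ∈ Cᶜ, loss what i :=
    Finset.sum_congr rfl fun i hi => by simp [loss, w', Finset.mem_compl.mp hi]
  have hloss_nonneg : 0 ≤ ∑ i ∈ C, loss what i :=
    Finset.sum_nonneg fun i _ => by positivity
  have hin : crossGTV A w' C C = 0 :=
    Finset.sum_eq_zero fun i hi => Finset.sum_eq_zero fun j hj => by simp [w', hi, hj]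
  have hout : crossGTV A w' Cᶜ Cᶜ = crossGTV A what Cᶜ Cᶜ :=
    Finset.sum_congr rfl fun i hi => Finset.sum_congr rfl fun j hj => by
      simp [w', Finset.mem_compl.mp hi, Finset.mem_compl.mp hj]
  have hcut : crossGTV A w' C Cᶜ = ∑ i ∈ C, ∑ j ∈ Cᶜ, A i j * ‖wC - what j‖ ^ 2 :=
    Finset.sum_congr rfl fun i hi => Finset.sum_congr rfl fun j hj => by
      simp [w', hi, Finset.mem_compl.mp hj]
  have key := hmin w'
  rw [gtvObj, gtvObj, gtv_eq_crossGTV hAsymm C, gtv_eq_crossGTV hAsymm C,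
    ← Finset.sum_add_sum_compl C, ← Finset.sum_add_sum_compl C (loss w'),
    hloss_C, hloss_compl, hin, hout, hcut] at key
  nlinarith [mul_nonneg hα (crossGTV_nonneg hAnonneg what C Cᶜ)]

end GTV

lemma Finset.sum_sum_mul_norm_sub_sq_le {ι E : Type*} [SeminormedAddCommGroup E]
    {a : ι → ι → ℝ} (ha : ∀ i j, 0 ≤ a i j) (s t : Finset ι) (x : E) {z : ι → E} {R : ℝ}
    (hz : ∀ j ∈ t, ‖z j‖ ≤ R) :
    ∑ i ∈ s, ∑ j ∈ t, a i j * ‖x - z j‖ ^ 2 ≤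
      (∑ i ∈ s, ∑ j ∈ t, a i j) * (2 * (‖x‖ ^ 2 + R ^ 2)) := by
  rw [Finset.sum_mul]
  refine Finset.sum_le_sum fun i _ => ?_
  rw [Finset.sum_mul]
  refine Finset.sum_le_sum fun j hj => mul_le_mul_of_nonneg_left ?_ (ha i j)
  calc ‖x - z j‖ ^ 2 ≤ (‖x‖ + ‖z j‖) ^ 2 := by gcongr; exact norm_sub_le x (z j)
    _ ≤ 2 * (‖x‖ ^ 2 + ‖z j‖ ^ 2) := add_sq_le
    _ ≤ 2 * (‖x‖ ^ 2 + R ^ 2) := by gcongr; exact hz j hj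

theorem gtvmin_clustered_bound_general
    {n d : ℕ} (A : Matrix (Fin n) (Fin n) ℝ)
    (hAsymm : ∀ i j, A i j = A j i) (hAnonneg : ∀ i j, 0 ≤ A i j)
    (m : Fin n → ℕ)
    (X : (i : Fin n) → Matrix (Fin (m i)) (Fin d) ℝ)
    (y : (i : Fin n) → EuclideanSpace ℝ (Fin (m i)))
    (α : ℝ) (hα : 0 < α)
    (C : Finset (Fin n))
    (wC : EuclideanSpace ℝ (Fin d))
    (ε : (i : Fin n) → EuclideanSpace ℝ (Fin (m i)))
    (hy : ∀ i ∈ C, y i = Matrix.toEuclideanLin (X i) wC + ε i)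
    (what : Fin n → EuclideanSpace ℝ (Fin d))
    (hmin : ∀ w : Fin n → EuclideanSpace ℝ (Fin d),
      gtvObj A m X y α what ≤ gtvObj A m X y α w)
    (hconn : 0 < eigTwo (lapSub A C))
    (R : ℝ) (hR : R = ⨆ i : {j : Fin n // j ∉ C}, ‖what i.1‖) :
    ∑ i ∈ C, ‖what i - (C.card : ℝ)⁻¹ • ∑ i' ∈ C, what i'‖ ^ 2 ≤
      1 / (α * eigTwo (lapSub A C)) *
        ((∑ i ∈ C, (1 / (m i : ℝ)) * ‖ε i‖ ^ 2) +
          2 * α * (∑ i ∈ C, ∑ j ∈ Cᶜ, A i j) * (‖wC‖ ^ 2 + R ^ 2)) := by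
  have hR_le (j : Fin n) (hj : j ∈ Cᶜ) : ‖what j‖ ≤ R :=
    hR ▸ le_ciSup (f := fun i : {j // j ∉ C} => ‖what i.1‖) (Set.finite_range _).bddAbove
      ⟨j, Finset.mem_compl.mp hj⟩
  have hspec := eigTwo_lapSub_mul_sum_norm_sq_le A C hAsymm hconn _
    (Finset.sum_sub_card_inv_smul_sum (𝕜 := ℝ) C what)
  simp only [sub_sub_sub_cancel_right] at hspec
  have hopt := crossGTV_self_le_of_forall_gtvObj_le hAsymm hAnonneg hα.le hy hmin
  have hcut := Finset.sum_sum_mul_norm_sub_sq_le hAnonneg C Cᶜ wC hR_le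
  rw [one_div, inv_mul_eq_div, le_div_iff₀ (mul_pos hα hconn)]
  calc (∑ i ∈ C, ‖what i - (C.card : ℝ)⁻¹ • ∑ i' ∈ C, what i'‖ ^ 2) * (α * eigTwo (lapSub A C))
      ≤ α * (1 / 2 * crossGTV A what C C) := by
        rw [mul_comm, mul_assoc]
        exact mul_le_mul_of_nonneg_left hspec hα.le
    _ ≤ ∑ i ∈ C, (1 / (m i : ℝ)) * ‖ε i‖ ^ 2 +
          α * ((∑ i ∈ C, ∑ j ∈ Cᶜ, A i j) * (2 * (‖wC‖ ^ 2 + R ^ 2))) := by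
        grw [hopt, hcut]
    _ = _ := by ring

/-- Clustered GTVMin bound: if the datasets in a nonempty cluster `C` share a
common parameter vector `w̄^{(C)}` and the induced subgraph on `C` is connected
(`λ₂(L_C) > 0`), then the deviations of the GTVMin solution from its cluster-average satisfy
`∑_{i∈C} ‖w̃⁽ⁱ⁾‖₂² ≤ (1/(α λ₂(L_C))) [∑_{i∈C}(1/mᵢ)‖ε⁽ⁱ⁾‖₂² + 2 α b(C)(‖w̄^{(C)}‖₂² + R²)]`. -/
theorem gtvmin_clustered_bound
    {n d : ℕ} (A : Matrix (Fin n) (Fin n) ℝ)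
    (hAsymm : ∀ i j, A i j = A j i) (hAnonneg : ∀ i j, 0 ≤ A i j)
    (hAdiag : ∀ i, A i i = 0)
    (m : Fin n → ℕ)
    (X : (i : Fin n) → Matrix (Fin (m i)) (Fin d) ℝ)
    (y : (i : Fin n) → EuclideanSpace ℝ (Fin (m i)))
    (α : ℝ) (hα : 0 < α)
    (C : Finset (Fin n)) (hCne : C.Nonempty)
    (wC : EuclideanSpace ℝ (Fin d))
    (ε : (i : Fin n) → EuclideanSpace ℝ (Fin (m i)))
    (hy : ∀ i ∈ C, y i = Matrix.toEuclideanLin (X i) wC + ε i)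
    (what : Fin n → EuclideanSpace ℝ (Fin d))
    (hmin : ∀ w : Fin n → EuclideanSpace ℝ (Fin d),
      gtvObj A m X y α what ≤ gtvObj A m X y α w)
    (hconn : 0 < eigTwo (lapSub A C))
    (R : ℝ) (hR : R = ⨆ i : {j : Fin n // j ∉ C}, ‖what i.1‖) :
    ∑ i ∈ C, ‖what i - (C.card : ℝ)⁻¹ • ∑ i' ∈ C, what i'‖ ^ 2 ≤
      1 / (α * eigTwo (lapSub A C)) *
        ((∑ i ∈ C, (1 / (m i : ℝ)) * ‖ε i‖ ^ 2) +
          2 * α * (∑ i ∈ C, ∑ j ∈ Cᶜ, A i j) * (‖wC‖ ^ 2 + R ^ 2)) :=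
  gtvmin_clustered_bound_general A hAsymm hAnonneg m X y α hα C wC ε hy what hmin hconn R hR
end
end

section
/- Assume the local datasets satisfy y⁽ⁱ⁾ = X⁽ⁱ⁾ w̄ + ε⁽ⁱ⁾ for every node i = 1,…,n with one common parameter vector w̄ ∈ ℝ^d, that λ₂(L) > 0, and that λ̄_min > 0. Let (ŵ⁽¹⁾,…,ŵ⁽ⁿ⁾) be the solution of GTVMin and let c̄ = (1/n) Σ_{i=1}^n ŵ⁽ⁱ⁾ be the average of the learnt local parameters. Then ‖c̄ − w̄‖₂² ≤ 2 ( λ_max + λ_max²/(λ₂(L) α) ) · Σ_{i=1}^n (1/mᵢ) ‖ε⁽ⁱ⁾‖₂² / ( n λ̄_min² ). -/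
open Matrix Finset
open scoped Kronecker

noncomputable section

/-!
Comparing the GTVMin objective at `ŵ` with its value at the constant tuple `w̄` bounds
`α · GTV(ŵ)` by the noise energy `σ = ∑ᵢ ‖εᵢ‖² / mᵢ`. The deviations `ŵᵢ - c̄` sum to zero, so
coordinatewise they are orthogonal to the all-ones kernel vector of `L`, whence
`λ₂(L) ∑ᵢ ‖ŵᵢ - c̄‖² ≤ GTV(ŵ) ≤ σ / α`.

A common shift of all local parameters does not change the GTV, so at the minimiser the local
normal equations add up to `(∑ᵢ Qᵢ)(c̄ - w̄) = ∑ᵢ Xᵢᵀ εᵢ / mᵢ - ∑ᵢ Qᵢ (ŵᵢ - c̄)`. The left side has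
norm at least `n λ̄_min ‖c̄ - w̄‖`; by Cauchy–Schwarz over the nodes, the squared norms of the two
terms on the right are at most `n λ_max σ` and `n λ_max² σ / (λ₂(L) α)`.
-/

lemma sq_norm_sum_le_card_mul {ι E : Type*} [SeminormedAddCommGroup E] (s : Finset ι)
    (v : ι → E) : ‖∑ i ∈ s, v i‖ ^ 2 ≤ s.card * ∑ i ∈ s, ‖v i‖ ^ 2 :=
  (pow_le_pow_left₀ (norm_nonneg _) (norm_sum_le s v) 2).trans sq_sum_le_card_mul_sum_sq

lemma Fin.sum_sub_inv_smul_sum {n : ℕ} {E : Type*} [AddCommGroup E] [Module ℝ E] (hn : n ≠ 0)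
    (v : Fin n → E) : ∑ i, (v i - (n : ℝ)⁻¹ • ∑ j, v j) = 0 := by
  rw [Finset.sum_sub_distrib, Finset.sum_const, Finset.card_univ, Fintype.card_fin,
    ← Nat.cast_smul_eq_nsmul ℝ, smul_smul, mul_inv_cancel₀ (Nat.cast_ne_zero.mpr hn), one_smul,
    sub_self]

lemma Finset.two_mul_sum_filter_lt {ι R : Type*} [Fintype ι] [LinearOrder ι] [NonAssocSemiring R]
    (f : ι → ι → R) (hf : ∀ i j, f i j = f j i) (hdiag : ∀ i, f i i = 0) :
    2 * ∑ p ∈ Finset.univ.filter (fun p : ι × ι => p.1 < p.2), f p.1 p.2 = ∑ i, ∑ j, f i j := by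
  have hsplit : ∀ i j, f i j = (if i < j then f i j else 0) + (if j < i then f j i else 0) := by
    intro i j
    rcases lt_trichotomy i j with h | rfl | h
    · simp [h, h.not_gt]
    · simp [hdiag]
    · simp [h, h.not_gt, hf i j]
  calc 2 * ∑ p ∈ Finset.univ.filter (fun p : ι × ι => p.1 < p.2), f p.1 p.2
      = ∑ i, ∑ j, (if i < j then f i j else 0) + ∑ i, ∑ j, (if j < i then f j i else 0) := by
        rw [Finset.sum_filter, Fintype.sum_prod_type, two_mul]
        exact congrArg _ Finset.sum_comm
    _ = ∑ i, ∑ j, f i j := by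
        rw [← Finset.sum_add_distrib]
        refine Finset.sum_congr rfl fun i _ => ?_
        rw [← Finset.sum_add_distrib]
        exact Finset.sum_congr rfl fun j _ => (hsplit i j).symm

lemma sq_norm_adjoint_le {E F : Type*} [NormedAddCommGroup E] [InnerProductSpace ℝ E]
    [FiniteDimensional ℝ E] [NormedAddCommGroup F] [InnerProductSpace ℝ F] [FiniteDimensional ℝ F]
    (T : E →ₗ[ℝ] F) {K : ℝ} (hK : 0 ≤ K) (hT : ∀ x, ‖T x‖ ^ 2 ≤ K * ‖x‖ ^ 2) (y : F) :
    ‖LinearMap.adjoint T y‖ ^ 2 ≤ K * ‖y‖ ^ 2 := by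
  set u := LinearMap.adjoint T y with hu_def
  have hu : ‖u‖ ^ 2 ≤ ‖T u‖ * ‖y‖ :=
    calc ‖u‖ ^ 2 = inner ℝ u (LinearMap.adjoint T y) := (real_inner_self_eq_norm_sq _).symm
      _ = inner ℝ (T u) y := LinearMap.adjoint_inner_right _ _ _
      _ ≤ ‖T u‖ * ‖y‖ := real_inner_le_norm _ _
  have h4 : ‖u‖ ^ 2 * ‖u‖ ^ 2 ≤ ‖u‖ ^ 2 * (K * ‖y‖ ^ 2) :=
    calc ‖u‖ ^ 2 * ‖u‖ ^ 2 ≤ (‖T u‖ * ‖y‖) * (‖T u‖ * ‖y‖) :=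
          mul_self_le_mul_self (sq_nonneg _) hu
      _ = ‖T u‖ ^ 2 * ‖y‖ ^ 2 := by ring
      _ ≤ K * ‖u‖ ^ 2 * ‖y‖ ^ 2 := by gcongr; exact hT u
      _ = ‖u‖ ^ 2 * (K * ‖y‖ ^ 2) := by ring
  rcases (sq_nonneg ‖u‖).eq_or_lt with h0 | hpos
  · rw [← h0]
    positivity
  · exact le_of_mul_le_mul_left h4 hpos

section Spectral

variable {κ : Type*} [Fintype κ]

lemma EuclideanSpace.inner_toLp_toLp_real (x y : κ → ℝ) :
    inner ℝ (WithLp.toLp 2 x : EuclideanSpace ℝ κ) (WithLp.toLp 2 y) = x ⬝ᵥ y := by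
  rw [EuclideanSpace.inner_toLp_toLp]
  simp [dotProduct_comm]

lemma OrthonormalBasis.sum_sq_inner_right_real {E : Type*} [NormedAddCommGroup E]
    [InnerProductSpace ℝ E] (b : OrthonormalBasis κ ℝ E) (x : E) :
    ∑ j, inner ℝ (b j) x ^ 2 = ‖x‖ ^ 2 := by
  simpa only [Real.norm_eq_abs, sq_abs] using b.sum_sq_norm_inner_right x

variable [DecidableEq κ] {M : Matrix κ κ ℝ}

namespace Matrix.IsHermitian

lemma toEuclideanLin_eigenvectorBasis (hM : M.IsHermitian) (j : κ) :
    toEuclideanLin M (hM.eigenvectorBasis j) = hM.eigenvalues j • hM.eigenvectorBasis j := by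
  ext i
  simpa using congrFun (hM.mulVec_eigenvectorBasis j) i

lemma inner_eigenvectorBasis_toEuclideanLin (hM : M.IsHermitian) (j : κ)
    (x : EuclideanSpace ℝ κ) :
    inner ℝ (hM.eigenvectorBasis j) (toEuclideanLin M x)
      = hM.eigenvalues j * inner ℝ (hM.eigenvectorBasis j) x := by
  rw [← isSymmetric_toEuclideanLin_iff.mpr hM, hM.toEuclideanLin_eigenvectorBasis,
    real_inner_smul_left]

lemma inner_toEuclideanLin_eq_sum (hM : M.IsHermitian) (x : EuclideanSpace ℝ κ) :
    inner ℝ x (toEuclideanLin M x)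
      = ∑ j, hM.eigenvalues j * inner ℝ (hM.eigenvectorBasis j) x ^ 2 := by
  rw [← hM.eigenvectorBasis.sum_inner_mul_inner]
  refine Finset.sum_congr rfl fun j _ => ?_
  rw [hM.inner_eigenvectorBasis_toEuclideanLin, real_inner_comm]
  ring

lemma sq_norm_toEuclideanLin_eq_sum (hM : M.IsHermitian) (x : EuclideanSpace ℝ κ) :
    ‖toEuclideanLin M x‖ ^ 2
      = ∑ j, hM.eigenvalues j ^ 2 * inner ℝ (hM.eigenvectorBasis j) x ^ 2 := by
  rw [← hM.eigenvectorBasis.sum_sq_inner_right_real]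
  refine Finset.sum_congr rfl fun j _ => ?_
  rw [hM.inner_eigenvectorBasis_toEuclideanLin]
  ring

lemma matEigs_eq (hM : M.IsHermitian) : matEigs M = hM.eigenvalues := dif_pos hM

lemma lamMin_le_eigenvalues (hM : M.IsHermitian) (j : κ) : lamMin M ≤ hM.eigenvalues j := by
  rw [lamMin, hM.matEigs_eq]
  exact ciInf_le (Set.finite_range _).bddBelow j

lemma eigenvalues_le_lamMax (hM : M.IsHermitian) (j : κ) : hM.eigenvalues j ≤ lamMax M := by
  rw [lamMax, hM.matEigs_eq]
  exact le_ciSup (Set.finite_range _).bddAbove j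

lemma lamMin_mul_sq_norm_le_inner (hM : M.IsHermitian) (x : EuclideanSpace ℝ κ) :
    lamMin M * ‖x‖ ^ 2 ≤ inner ℝ x (toEuclideanLin M x) := by
  rw [hM.inner_toEuclideanLin_eq_sum, ← hM.eigenvectorBasis.sum_sq_inner_right_real,
    Finset.mul_sum]
  gcongr with j
  exact hM.lamMin_le_eigenvalues j

lemma inner_le_lamMax_mul_sq_norm (hM : M.IsHermitian) (x : EuclideanSpace ℝ κ) :
    inner ℝ x (toEuclideanLin M x) ≤ lamMax M * ‖x‖ ^ 2 := by
  rw [hM.inner_toEuclideanLin_eq_sum, ← hM.eigenvectorBasis.sum_sq_inner_right_real,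
    Finset.mul_sum]
  gcongr with j
  exact hM.eigenvalues_le_lamMax j

lemma lamMin_mul_norm_le_norm_toEuclideanLin (hM : M.IsHermitian) (x : EuclideanSpace ℝ κ) :
    lamMin M * ‖x‖ ≤ ‖toEuclideanLin M x‖ := by
  rcases (norm_nonneg x).eq_or_lt with hx | hx
  · rw [← hx, mul_zero]
    exact norm_nonneg _
  refine le_of_mul_le_mul_right ?_ hx
  calc lamMin M * ‖x‖ * ‖x‖ = lamMin M * ‖x‖ ^ 2 := by ring
    _ ≤ inner ℝ x (toEuclideanLin M x) := hM.lamMin_mul_sq_norm_le_inner x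
    _ ≤ ‖x‖ * ‖toEuclideanLin M x‖ := real_inner_le_norm _ _
    _ = ‖toEuclideanLin M x‖ * ‖x‖ := mul_comm _ _

lemma mul_lamMin_inv_smul_mul_norm_le (hM : M.IsHermitian) {c : ℝ} (hc : 0 < c)
    (x : EuclideanSpace ℝ κ) :
    c * lamMin (c⁻¹ • M) * ‖x‖ ≤ ‖toEuclideanLin M x‖ := by
  have h := (hM.smul (IsSelfAdjoint.all c⁻¹)).lamMin_mul_norm_le_norm_toEuclideanLin x
  rwa [map_smul, LinearMap.smul_apply, norm_smul, Real.norm_of_nonneg (inv_nonneg.mpr hc.le),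
    le_inv_mul_iff₀ hc, ← mul_assoc] at h

/-- All eigenvalues but `λ j₀` are positive, so the kernel vector `v` is a multiple of the
eigenvector `b j₀`, and `x ⊥ v` has no component along it. -/
lemma mul_sq_norm_le_inner_of_inner_kernel_eq_zero (hM : M.IsHermitian) {t : ℝ} (ht : 0 < t)
    {j₀ : κ} (hj₀ : ∀ j ≠ j₀, t ≤ hM.eigenvalues j) {v : EuclideanSpace ℝ κ} (hv : v ≠ 0)
    (hMv : toEuclideanLin M v = 0) {x : EuclideanSpace ℝ κ} (hx : inner ℝ v x = 0) :
    t * ‖x‖ ^ 2 ≤ inner ℝ x (toEuclideanLin M x) := by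
  set b := hM.eigenvectorBasis
  have hv_ne : ∀ j ≠ j₀, inner ℝ (b j) v = 0 := fun j hj => by
    have h := hM.inner_eigenvectorBasis_toEuclideanLin j v
    rw [hMv, inner_zero_right, eq_comm] at h
    exact (mul_eq_zero.mp h).resolve_left (ht.trans_le (hj₀ j hj)).ne'
  have hv₀ : inner ℝ (b j₀) v ≠ 0 := fun h => hv <| by
    rw [← norm_eq_zero, ← pow_eq_zero_iff two_ne_zero, ← b.sum_sq_inner_right_real]
    refine Finset.sum_eq_zero fun j _ => ?_
    by_cases hj : j = j₀
    · rw [hj, h, sq, zero_mul]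
    · rw [hv_ne j hj, sq, zero_mul]
  have hx₀ : inner ℝ (b j₀) x = 0 := by
    rw [← b.sum_inner_mul_inner, Finset.sum_eq_single j₀
      (fun j _ hj => by rw [real_inner_comm, hv_ne j hj, zero_mul]) (by simp),
      real_inner_comm] at hx
    exact (mul_eq_zero.mp hx).resolve_left hv₀
  rw [hM.inner_toEuclideanLin_eq_sum, ← b.sum_sq_inner_right_real, Finset.mul_sum]
  refine Finset.sum_le_sum fun j _ => ?_
  by_cases hj : j = j₀
  · rw [hj, hx₀]
    simp
  · exact mul_le_mul_of_nonneg_right (hj₀ j hj) (sq_nonneg _)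

end Matrix.IsHermitian

namespace Matrix.PosSemidef

lemma lamMax_nonneg (hM : M.PosSemidef) : 0 ≤ lamMax M := by
  rw [lamMax, hM.isHermitian.matEigs_eq]
  exact Real.iSup_nonneg hM.eigenvalues_nonneg

lemma norm_toEuclideanLin_le_lamMax_mul (hM : M.PosSemidef) (x : EuclideanSpace ℝ κ) :
    ‖toEuclideanLin M x‖ ≤ lamMax M * ‖x‖ := by
  rw [← sq_le_sq₀ (norm_nonneg _) (mul_nonneg hM.lamMax_nonneg (norm_nonneg _)), mul_pow,
    hM.isHermitian.sq_norm_toEuclideanLin_eq_sum,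
    ← hM.isHermitian.eigenvectorBasis.sum_sq_inner_right_real, Finset.mul_sum]
  exact Finset.sum_le_sum fun j _ => mul_le_mul_of_nonneg_right
    (pow_le_pow_left₀ (hM.eigenvalues_nonneg j) (hM.isHermitian.eigenvalues_le_lamMax j) 2)
    (sq_nonneg _)

end Matrix.PosSemidef

lemma sq_norm_sum_toEuclideanLin_le {ι : Type*} [Fintype ι] {Q : ι → Matrix κ κ ℝ}
    (hQ : ∀ i, (Q i).PosSemidef) {L : ℝ} (hL : ∀ i, lamMax (Q i) ≤ L)
    (x : ι → EuclideanSpace ℝ κ) :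
    ‖∑ i, toEuclideanLin (Q i) (x i)‖ ^ 2 ≤ Fintype.card ι * (L ^ 2 * ∑ i, ‖x i‖ ^ 2) := by
  refine (sq_norm_sum_le_card_mul _ _).trans ?_
  rw [Finset.card_univ]
  gcongr
  rw [Finset.mul_sum]
  gcongr with i
  rw [← mul_pow]
  gcongr
  exact ((hQ i).norm_toEuclideanLin_le_lamMax_mul _).trans (by gcongr; exact hL i)

end Spectral

section SecondEigenvalue

variable {ι : Type*} [Fintype ι] [DecidableEq ι]

lemma one_lt_card_of_eigTwo_ne_zero {M : Matrix ι ι ℝ} (h : eigTwo M ≠ 0) :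
    1 < Fintype.card ι := by
  by_contra h'
  exact h (dif_neg h')

lemma one_lt_of_eigTwo_pos {n : ℕ} {M : Matrix (Fin n) (Fin n) ℝ} (h : 0 < eigTwo M) : 1 < n := by
  simpa using one_lt_card_of_eigTwo_ne_zero h.ne'

lemma Matrix.IsHermitian.eigTwo_mul_dotProduct_self_le {M : Matrix ι ι ℝ} (hM : M.IsHermitian)
    (ht : 0 < eigTwo M) {v : ι → ℝ} (hv : v ≠ 0) (hMv : M *ᵥ v = 0) {x : ι → ℝ}
    (hx : v ⬝ᵥ x = 0) :
    eigTwo M * (x ⬝ᵥ x) ≤ x ⬝ᵥ (M *ᵥ x) := by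
  have hN := one_lt_card_of_eigTwo_ne_zero ht.ne'
  set e := Fintype.equivFin ι
  have hM' : (Matrix.reindex e e M).IsHermitian := hM.submatrix _
  set s := Tuple.sort hM'.eigenvalues
  have hle : ∀ j ≠ s ⟨0, by omega⟩, eigTwo M ≤ hM'.eigenvalues j := by
    intro j hj
    have h1 : (⟨1, hN⟩ : Fin _) ≤ s.symm j := Fin.mk_le_of_le_val <| Nat.pos_of_ne_zero
      fun h0 => hj (by rw [← s.apply_symm_apply j]; exact congrArg s (Fin.ext h0))
    rw [eigTwo, dif_pos hN, sortedEigs, hM'.matEigs_eq, ← s.apply_symm_apply j]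
    exact Tuple.monotone_sort hM'.eigenvalues h1
  have hinner : ∀ u w : ι → ℝ, inner ℝ (WithLp.toLp 2 (u ∘ e.symm) : EuclideanSpace ℝ _)
      (WithLp.toLp 2 (w ∘ e.symm)) = u ⬝ᵥ w := fun u w => by
    rw [EuclideanSpace.inner_toLp_toLp_real, comp_equiv_symm_dotProduct, Function.comp_assoc,
      Equiv.symm_comp_self, Function.comp_id]
  have hlin : ∀ u : ι → ℝ, toEuclideanLin (Matrix.reindex e e M) (WithLp.toLp 2 (u ∘ e.symm))
      = WithLp.toLp 2 ((M *ᵥ u) ∘ e.symm) := fun u => by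
    rw [toLpLin_toLp, toLin'_apply, reindex_apply, submatrix_mulVec_equiv, Equiv.symm_symm,
      Function.comp_assoc, Equiv.symm_comp_self, Function.comp_id]
  have key := hM'.mul_sq_norm_le_inner_of_inner_kernel_eq_zero ht hle
    (v := WithLp.toLp 2 (v ∘ e.symm)) (x := WithLp.toLp 2 (x ∘ e.symm))
    (fun h => hv <| funext fun i => by simpa using congrArg (·.ofLp (e i)) h)
    (by rw [hlin, hMv]; rfl) (by rw [hinner, hx])
  rwa [← real_inner_self_eq_norm_sq, hlin, hinner, hinner] at key

end SecondEigenvalue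

section Laplacian

variable {n d : ℕ} (A : Matrix (Fin n) (Fin n) ℝ)

lemma lap_mulVec_apply (x : Fin n → ℝ) (i : Fin n) :
    (lap A *ᵥ x) i = ∑ j, A i j * (x i - x j) := by
  rw [mulVec, dotProduct, ← Finset.add_sum_erase _ _ (Finset.mem_univ i),
    ← Finset.add_sum_erase _ _ (Finset.mem_univ i), sub_self, mul_zero, zero_add]
  have hoff : ∀ j ∈ Finset.univ.erase i, lap A i j * x j = -(A i j * x j) := fun j hj => by
    simp [lap, (Finset.ne_of_mem_erase hj).symm]
  rw [Finset.sum_congr rfl hoff, show lap A i i = ∑ k ∈ Finset.univ.erase i, A i k from if_pos rfl]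
  simp only [mul_sub, Finset.sum_sub_distrib, Finset.sum_neg_distrib, Finset.sum_mul]
  ring

lemma lap_mulVec_const (c : ℝ) : lap A *ᵥ (fun _ => c) = 0 := by
  ext i
  simp [lap_mulVec_apply]

lemma lap_isHermitian (hA : ∀ i j, A i j = A j i) : (lap A).IsHermitian := by
  refine Matrix.IsHermitian.ext fun i j => ?_
  by_cases h : i = j
  · subst h
    rfl
  · simp [lap, h, Ne.symm h, hA]

lemma dotProduct_lap_mulVec (hA : ∀ i j, A i j = A j i) (x : Fin n → ℝ) :
    x ⬝ᵥ (lap A *ᵥ x) = ∑ p ∈ Finset.univ.filter (fun p : Fin n × Fin n => p.1 < p.2),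
      A p.1 p.2 * (x p.1 - x p.2) ^ 2 := by
  have hquad : x ⬝ᵥ (lap A *ᵥ x) = ∑ i, ∑ j, A i j * (x i * (x i - x j)) := by
    simp only [dotProduct, lap_mulVec_apply, Finset.mul_sum]
    exact Finset.sum_congr rfl fun i _ => Finset.sum_congr rfl fun j _ => by ring
  have hswap : ∑ i, ∑ j, A i j * (x i * (x i - x j))
      = ∑ i, ∑ j, A i j * (x j * (x j - x i)) := by
    rw [Finset.sum_comm]
    exact Finset.sum_congr rfl fun i _ => Finset.sum_congr rfl fun j _ => by rw [hA]
  refine mul_left_cancel₀ (two_ne_zero (α := ℝ)) ?_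
  rw [Finset.two_mul_sum_filter_lt (fun i j => A i j * (x i - x j) ^ 2)
    (fun i j => by rw [hA]; ring) (fun i => by simp), hquad, two_mul]
  nth_rw 2 [hswap]
  rw [← Finset.sum_add_distrib]
  refine Finset.sum_congr rfl fun i _ => ?_
  rw [← Finset.sum_add_distrib]
  exact Finset.sum_congr rfl fun j _ => by ring

def gtv (w : Fin n → EuclideanSpace ℝ (Fin d)) : ℝ :=
  ∑ p ∈ Finset.univ.filter (fun p : Fin n × Fin n => p.1 < p.2), A p.1 p.2 * ‖w p.1 - w p.2‖ ^ 2

lemma gtv_const (c : EuclideanSpace ℝ (Fin d)) : gtv A (fun _ => c) = 0 := by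
  simp [gtv]

lemma gtv_sub_const (w : Fin n → EuclideanSpace ℝ (Fin d)) (c : EuclideanSpace ℝ (Fin d)) :
    gtv A (fun i => w i - c) = gtv A w := by
  simp only [gtv, sub_sub_sub_cancel_right]

lemma gtv_eq_sum_dotProduct_lap (hA : ∀ i j, A i j = A j i)
    (w : Fin n → EuclideanSpace ℝ (Fin d)) :
    gtv A w = ∑ k, (fun i => w i k) ⬝ᵥ (lap A *ᵥ fun i => w i k) := by
  simp only [dotProduct_lap_mulVec A hA, gtv, EuclideanSpace.real_norm_sq_eq, PiLp.sub_apply,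
    Finset.mul_sum]
  exact Finset.sum_comm

lemma eigTwo_lap_mul_sum_sq_norm_le_gtv (hA : ∀ i j, A i j = A j i) (ht : 0 < eigTwo (lap A))
    {w : Fin n → EuclideanSpace ℝ (Fin d)} (hw : ∑ i, w i = 0) :
    eigTwo (lap A) * ∑ i, ‖w i‖ ^ 2 ≤ gtv A w := by
  have hn : 0 < n := (one_lt_of_eigTwo_pos ht).trans' zero_lt_one
  simp only [gtv_eq_sum_dotProduct_lap A hA, EuclideanSpace.real_norm_sq_eq]
  rw [Finset.sum_comm, Finset.mul_sum]
  refine Finset.sum_le_sum fun k _ => ?_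
  have hk : ∑ i, w i k = 0 := by simpa using congrArg (·.ofLp k) hw
  simpa [dotProduct, sq] using (lap_isHermitian A hA).eigTwo_mul_dotProduct_self_le ht
    (v := fun _ => 1) (fun h => one_ne_zero (congrFun h ⟨0, hn⟩)) (lap_mulVec_const A 1)
    (x := fun i => w i k) (by simpa [dotProduct] using hk)

end Laplacian

lemma Matrix.posSemidef_smul_transpose_mul_self {κ μ : Type*} [Fintype κ] [Fintype μ]
    (X : Matrix κ μ ℝ) {c : ℝ} (hc : 0 ≤ c) :
    (c • (Xᵀ * X)).PosSemidef := by
  simpa [conjTranspose_eq_transpose_of_trivial] using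
    (posSemidef_conjTranspose_mul_self X).smul hc

section Transpose

variable {κ μ : Type*} [Fintype κ] [DecidableEq κ] [Fintype μ] [DecidableEq μ]

lemma Matrix.toEuclideanLin_transpose (X : Matrix κ μ ℝ) :
    toEuclideanLin Xᵀ = LinearMap.adjoint (toEuclideanLin X) := by
  rw [← conjTranspose_eq_transpose_of_trivial, toEuclideanLin_conjTranspose_eq_adjoint]

lemma Matrix.inner_toEuclideanLin_transpose (X : Matrix κ μ ℝ) (u : EuclideanSpace ℝ μ)
    (r : EuclideanSpace ℝ κ) :
    inner ℝ u (toEuclideanLin Xᵀ r) = inner ℝ (toEuclideanLin X u) r := by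
  rw [Matrix.toEuclideanLin_transpose, LinearMap.adjoint_inner_right]

/-- `‖X u‖² = c⁻¹ ⟪u, c XᵀX u⟫` bounds `X`, and the same bound passes to its adjoint `Xᵀ`. -/
lemma Matrix.sq_norm_smul_transpose_le (X : Matrix κ μ ℝ) {c : ℝ} (hc : 0 ≤ c)
    (e : EuclideanSpace ℝ κ) :
    ‖c • toEuclideanLin Xᵀ e‖ ^ 2 ≤ lamMax (c • (Xᵀ * X)) * (c * ‖e‖ ^ 2) := by
  have hQ := X.posSemidef_smul_transpose_mul_self hc
  rcases hc.eq_or_lt with rfl | hc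
  · simp
  have hX : ∀ u, ‖toEuclideanLin X u‖ ^ 2 ≤ c⁻¹ * lamMax (c • (Xᵀ * X)) * ‖u‖ ^ 2 := fun u => by
    have h := hQ.isHermitian.inner_le_lamMax_mul_sq_norm u
    rw [map_smul, LinearMap.smul_apply, real_inner_smul_right, toLpLin_mul_same,
      LinearMap.comp_apply, inner_toEuclideanLin_transpose, real_inner_self_eq_norm_sq] at h
    rwa [mul_assoc, le_inv_mul_iff₀ hc]
  have h := sq_norm_adjoint_le _ (by have := hQ.lamMax_nonneg; positivity) hX e
  rw [← Matrix.toEuclideanLin_transpose] at h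
  rw [norm_smul, mul_pow, Real.norm_eq_abs, sq_abs]
  calc c ^ 2 * ‖toEuclideanLin Xᵀ e‖ ^ 2
      ≤ c ^ 2 * (c⁻¹ * lamMax (c • (Xᵀ * X)) * ‖e‖ ^ 2) := by gcongr
    _ = lamMax (c • (Xᵀ * X)) * (c * ‖e‖ ^ 2) := by field_simp

end Transpose

section GTVMin

variable {n d : ℕ} {m : Fin n → ℕ} (X : (i : Fin n) → Matrix (Fin (m i)) (Fin d) ℝ)
  (y : (i : Fin n) → EuclideanSpace ℝ (Fin (m i)))

def empLoss (w : Fin n → EuclideanSpace ℝ (Fin d)) : ℝ :=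
  ∑ i, (1 / (m i : ℝ)) * ‖y i - toEuclideanLin (X i) (w i)‖ ^ 2

/-- Minus half the derivative of `empLoss` along a common shift of all local parameter vectors. -/
def normalResidual (w : Fin n → EuclideanSpace ℝ (Fin d)) : EuclideanSpace ℝ (Fin d) :=
  ∑ i, (m i : ℝ)⁻¹ • toEuclideanLin (X i)ᵀ (y i - toEuclideanLin (X i) (w i))

lemma gtvObj_eq_empLoss_add_gtv (A : Matrix (Fin n) (Fin n) ℝ) (α : ℝ)
    (w : Fin n → EuclideanSpace ℝ (Fin d)) :
    gtvObj A m X y α w = empLoss X y w + α * gtv A w := rfl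

lemma empLoss_nonneg (w : Fin n → EuclideanSpace ℝ (Fin d)) : 0 ≤ empLoss X y w :=
  Finset.sum_nonneg fun _ _ => by positivity

lemma empLoss_sub_const (w : Fin n → EuclideanSpace ℝ (Fin d)) (v : EuclideanSpace ℝ (Fin d)) :
    empLoss X y (fun i => w i - v) = empLoss X y w + 2 * inner ℝ v (normalResidual X y w)
      + ∑ i, (1 / (m i : ℝ)) * ‖toEuclideanLin (X i) v‖ ^ 2 := by
  simp only [empLoss, normalResidual, inner_sum, real_inner_smul_right,
    inner_toEuclideanLin_transpose, Finset.mul_sum, ← Finset.sum_add_distrib]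
  refine Finset.sum_congr rfl fun i _ => ?_
  have hres : y i - toEuclideanLin (X i) (w i - v)
      = (y i - toEuclideanLin (X i) (w i)) + toEuclideanLin (X i) v := by
    rw [map_sub]
    abel
  rw [hres, norm_add_sq_real, one_div, real_inner_comm]
  ring

variable {A : Matrix (Fin n) (Fin n) ℝ} {α : ℝ} {w : Fin n → EuclideanSpace ℝ (Fin d)}

/-- The objective along `s ↦ w - s • g` is a quadratic in `s` minimised at `s = 0`, so its linear
coefficient `2 ‖g‖²` vanishes. -/
lemma normalResidual_eq_zero_of_forall_le
    (hmin : ∀ w', gtvObj A m X y α w ≤ gtvObj A m X y α w') : normalResidual X y w = 0 := by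
  generalize hg : normalResidual X y w = g
  set C := ∑ i, (1 / (m i : ℝ)) * ‖toEuclideanLin (X i) g‖ ^ 2
  have hquad : ∀ s : ℝ, 0 ≤ C * (s * s) + (2 * ‖g‖ ^ 2) * s + 0 := fun s => by
    have h := hmin (fun i => w i - s • g)
    simp only [gtvObj_eq_empLoss_add_gtv, empLoss_sub_const, gtv_sub_const, map_smul, norm_smul,
      real_inner_smul_left, hg, real_inner_self_eq_norm_sq] at h
    have hC : ∑ i, (1 / (m i : ℝ)) * (‖s‖ * ‖toEuclideanLin (X i) g‖) ^ 2 = C * (s * s) := by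
      rw [Finset.sum_mul]
      exact Finset.sum_congr rfl fun i _ => by rw [mul_pow, Real.norm_eq_abs, sq_abs]; ring
    linarith
  have h := discrim_le_zero hquad
  rw [discrim, mul_zero, sub_zero] at h
  simpa using le_antisymm h (sq_nonneg _)

lemma mul_gtv_le_empLoss_const (hmin : ∀ w', gtvObj A m X y α w ≤ gtvObj A m X y α w')
    (c : EuclideanSpace ℝ (Fin d)) : α * gtv A w ≤ empLoss X y (fun _ => c) := by
  have h := hmin (fun _ => c)
  rw [gtvObj_eq_empLoss_add_gtv, gtvObj_eq_empLoss_add_gtv, gtv_const, mul_zero, add_zero] at h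
  linarith [empLoss_nonneg X y w]

lemma eigTwo_mul_sum_sq_norm_sub_average_le (hA : ∀ i j, A i j = A j i)
    (ht : 0 < eigTwo (lap A)) (hα : 0 ≤ α) (hmin : ∀ w', gtvObj A m X y α w ≤ gtvObj A m X y α w')
    (c : EuclideanSpace ℝ (Fin d)) :
    eigTwo (lap A) * α * ∑ i, ‖w i - (n : ℝ)⁻¹ • ∑ j, w j‖ ^ 2 ≤ empLoss X y (fun _ => c) := by
  have hn : n ≠ 0 := ((one_lt_of_eigTwo_pos ht).trans' zero_lt_one).ne'
  have hgap := eigTwo_lap_mul_sum_sq_norm_le_gtv A hA ht (Fin.sum_sub_inv_smul_sum hn w)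
  rw [gtv_sub_const] at hgap
  calc eigTwo (lap A) * α * ∑ i, ‖w i - (n : ℝ)⁻¹ • ∑ j, w j‖ ^ 2
      = α * (eigTwo (lap A) * ∑ i, ‖w i - (n : ℝ)⁻¹ • ∑ j, w j‖ ^ 2) := by ring
    _ ≤ α * gtv A w := by gcongr
    _ ≤ empLoss X y (fun _ => c) := mul_gtv_le_empLoss_const X y hmin c

lemma sq_norm_sum_inv_smul_transpose_le {L : ℝ}
    (hL : ∀ i, lamMax ((m i : ℝ)⁻¹ • ((X i)ᵀ * X i)) ≤ L)
    (ε : (i : Fin n) → EuclideanSpace ℝ (Fin (m i))) :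
    ‖∑ i, (m i : ℝ)⁻¹ • toEuclideanLin (X i)ᵀ (ε i)‖ ^ 2
      ≤ n * (L * ∑ i, (1 / (m i : ℝ)) * ‖ε i‖ ^ 2) := by
  refine (sq_norm_sum_le_card_mul _ _).trans ?_
  rw [Finset.card_univ, Fintype.card_fin]
  gcongr
  rw [Finset.mul_sum]
  gcongr with i
  rw [one_div]
  exact ((X i).sq_norm_smul_transpose_le (by positivity) (ε i)).trans (by gcongr; exact hL i)

variable {X y} {wbar : EuclideanSpace ℝ (Fin d)} {ε : (i : Fin n) → EuclideanSpace ℝ (Fin (m i))}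

lemma empLoss_const_of_linear_model (hy : ∀ i, y i = toEuclideanLin (X i) wbar + ε i) :
    empLoss X y (fun _ => wbar) = ∑ i, (1 / (m i : ℝ)) * ‖ε i‖ ^ 2 := by
  simp [empLoss, hy]

lemma normalResidual_of_linear_model (hy : ∀ i, y i = toEuclideanLin (X i) wbar + ε i)
    (w : Fin n → EuclideanSpace ℝ (Fin d)) (c : EuclideanSpace ℝ (Fin d)) :
    normalResidual X y w = ∑ i, (m i : ℝ)⁻¹ • toEuclideanLin (X i)ᵀ (ε i)
      - ∑ i, toEuclideanLin ((m i : ℝ)⁻¹ • ((X i)ᵀ * X i)) (w i - c)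
      - toEuclideanLin (∑ i, (m i : ℝ)⁻¹ • ((X i)ᵀ * X i)) (c - wbar) := by
  simp only [normalResidual, hy, map_sum, LinearMap.sum_apply, ← Finset.sum_sub_distrib]
  refine Finset.sum_congr rfl fun i _ => ?_
  simp only [map_smul, LinearMap.smul_apply, toLpLin_mul_same, LinearMap.comp_apply, map_sub,
    map_add, smul_sub, smul_add]
  abel

end GTVMin

theorem gtvmin_average_error_bound_general
    {n d : ℕ} (A : Matrix (Fin n) (Fin n) ℝ)
    (hAsymm : ∀ i j, A i j = A j i)
    (m : Fin n → ℕ)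
    (X : (i : Fin n) → Matrix (Fin (m i)) (Fin d) ℝ)
    (y : (i : Fin n) → EuclideanSpace ℝ (Fin (m i)))
    (wbar : EuclideanSpace ℝ (Fin d))
    (ε : (i : Fin n) → EuclideanSpace ℝ (Fin (m i)))
    (hy : ∀ i, y i = Matrix.toEuclideanLin (X i) wbar + ε i)
    (α : ℝ) (hα : 0 < α)
    (Qb : Fin n → Matrix (Fin d) (Fin d) ℝ)
    (hQb : ∀ i, Qb i = (m i : ℝ)⁻¹ • ((X i)ᵀ * X i))
    (lmax lbar : ℝ)
    (hlmax : lmax = ⨆ i, lamMax (Qb i))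
    (hlbar : lbar = lamMin ((n : ℝ)⁻¹ • ∑ i, Qb i))
    (hconn : 0 < eigTwo (lap A)) (hlbarpos : 0 < lbar)
    (what : Fin n → EuclideanSpace ℝ (Fin d))
    (hmin : ∀ w : Fin n → EuclideanSpace ℝ (Fin d),
      gtvObj A m X y α what ≤ gtvObj A m X y α w) :
    ‖(n : ℝ)⁻¹ • (∑ i, what i) - wbar‖ ^ 2 ≤
      2 * (lmax + lmax ^ 2 / (eigTwo (lap A) * α)) *
        (∑ i, (1 / (m i : ℝ)) * ‖ε i‖ ^ 2) / ((n : ℝ) * lbar ^ 2) := by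
  have hn : (0 : ℝ) < n := by exact_mod_cast (one_lt_of_eigTwo_pos hconn).trans' zero_lt_one
  set t := eigTwo (lap A)
  set σ := ∑ i, (1 / (m i : ℝ)) * ‖ε i‖ ^ 2
  set c := (n : ℝ)⁻¹ • ∑ i, what i
  set a := ∑ i, (m i : ℝ)⁻¹ • toEuclideanLin (X i)ᵀ (ε i)
  set b := ∑ i, toEuclideanLin (Qb i) (what i - c)
  have hQ : ∀ i, (Qb i).PosSemidef := fun i =>
    hQb i ▸ (X i).posSemidef_smul_transpose_mul_self (by positivity)
  have hlmax_ge : ∀ i, lamMax (Qb i) ≤ lmax := fun i =>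
    hlmax ▸ le_ciSup (f := fun i => lamMax (Qb i)) (Set.finite_range _).bddAbove i
  have hspread : ∑ i, ‖what i - c‖ ^ 2 ≤ σ / (t * α) := by
    have h := eigTwo_mul_sum_sq_norm_sub_average_le X y hAsymm hconn hα.le hmin wbar
    rw [empLoss_const_of_linear_model hy] at h
    rw [le_div_iff₀ (by positivity)]
    linarith
  have hnormal : toEuclideanLin (∑ i, Qb i) (c - wbar) = a - b := by
    have h := normalResidual_of_linear_model hy what c
    simp only [normalResidual_eq_zero_of_forall_le X y hmin, ← hQb] at h
    exact (sub_eq_zero.mp h.symm).symm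
  have hD : n * lbar * ‖c - wbar‖ ≤ ‖a - b‖ := hlbar ▸ hnormal ▸
    (posSemidef_sum _ fun i _ => hQ i).isHermitian.mul_lamMin_inv_smul_mul_norm_le hn _
  have ha : ‖a‖ ^ 2 ≤ n * (lmax * σ) :=
    sq_norm_sum_inv_smul_transpose_le X (fun i => hQb i ▸ hlmax_ge i) ε
  have hb : ‖b‖ ^ 2 ≤ n * (lmax ^ 2 * ∑ i, ‖what i - c‖ ^ 2) := by
    simpa only [Fintype.card_fin] using sq_norm_sum_toEuclideanLin_le hQ hlmax_ge (what · - c)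
  have hab : ‖a - b‖ ^ 2 ≤ 2 * (‖a‖ ^ 2 + ‖b‖ ^ 2) :=
    (pow_le_pow_left₀ (norm_nonneg _) (norm_sub_le a b) 2).trans add_sq_le
  calc ‖c - wbar‖ ^ 2 = (n * lbar * ‖c - wbar‖) ^ 2 / (n * lbar) ^ 2 := by field_simp
    _ ≤ ‖a - b‖ ^ 2 / (n * lbar) ^ 2 := by gcongr
    _ ≤ 2 * (n * (lmax * σ) + n * (lmax ^ 2 * (σ / (t * α)))) / (n * lbar) ^ 2 := by
        gcongr
        refine hab.trans (by gcongr; exact hb.trans (by gcongr))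
    _ = 2 * (lmax + lmax ^ 2 / (t * α)) * σ / (n * lbar ^ 2) := by field_simp

/-- If all local datasets share a common parameter vector `w̄`, `λ₂(L) > 0`
and `λ̄_min > 0`, then the average `c̄` of the GTVMin solution satisfies
`‖c̄ − w̄‖₂² ≤ 2 (λ_max + λ_max²/(λ₂(L) α)) ∑ᵢ (1/mᵢ)‖ε⁽ⁱ⁾‖₂² / (n λ̄_min²)`. -/
theorem gtvmin_average_error_bound
    {n d : ℕ} (A : Matrix (Fin n) (Fin n) ℝ)
    (hAsymm : ∀ i j, A i j = A j i) (hAnonneg : ∀ i j, 0 ≤ A i j)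
    (hAdiag : ∀ i, A i i = 0)
    (m : Fin n → ℕ)
    (X : (i : Fin n) → Matrix (Fin (m i)) (Fin d) ℝ)
    (y : (i : Fin n) → EuclideanSpace ℝ (Fin (m i)))
    (wbar : EuclideanSpace ℝ (Fin d))
    (ε : (i : Fin n) → EuclideanSpace ℝ (Fin (m i)))
    (hy : ∀ i, y i = Matrix.toEuclideanLin (X i) wbar + ε i)
    (α : ℝ) (hα : 0 < α)
    (Qb : Fin n → Matrix (Fin d) (Fin d) ℝ)
    (hQb : ∀ i, Qb i = (m i : ℝ)⁻¹ • ((X i)ᵀ * X i))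
    (lmax lbar : ℝ)
    (hlmax : lmax = ⨆ i, lamMax (Qb i))
    (hlbar : lbar = lamMin ((n : ℝ)⁻¹ • ∑ i, Qb i))
    (hconn : 0 < eigTwo (lap A)) (hlbarpos : 0 < lbar)
    (what : Fin n → EuclideanSpace ℝ (Fin d))
    (hmin : ∀ w : Fin n → EuclideanSpace ℝ (Fin d),
      gtvObj A m X y α what ≤ gtvObj A m X y α w) :
    ‖(n : ℝ)⁻¹ • (∑ i, what i) - wbar‖ ^ 2 ≤
      2 * (lmax + lmax ^ 2 / (eigTwo (lap A) * α)) *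
        (∑ i, (1 / (m i : ℝ)) * ‖ε i‖ ^ 2) / ((n : ℝ) * lbar ^ 2) :=
  gtvmin_average_error_bound_general A hAsymm m X y wbar ε hy α hα Qb hQb lmax lbar hlmax hlbar
    hconn hlbarpos what hmin
end
end
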